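/- arXiv:1111.6195 — 2 statements merged into one kernel-verified Lean document; each statement's English description precedes it below -/
import Mathlib

section
/- With H(q,t,a) as in the hook super-polynomial of the trefoil, one has the identity in ℚ(t)[a]: H(1, t, a) = (1 + a + t)(a² + a(1 + t + t² + t³) + t(1 + t + t² + t⁴))/t. -/
/-- `H = HD_{3,2}(ω₁+ω₂; q,t,a)`, the hook super-polynomial of the trefoil,
as a function of field elements. -/
def Hhook {K : Type*} [Field K] (q t a : K) : K :=
  1 + a ^ 3 * q ^ 6 / t + 2 * q * t - q * t ^ 2 + 2 * q ^ 2 * t ^ 2 +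
    q ^ 3 * t ^ 2 - q ^ 2 * t ^ 3 + 2 * q ^ 3 * t ^ 3 - q ^ 3 * t ^ 4 +
    2 * q ^ 4 * t ^ 4 + q ^ 5 * t ^ 5 +
    a * (2 * q ^ 2 + q ^ 3 + q / t - q ^ 2 * t + 3 * q ^ 3 * t + q ^ 4 * t -
      q ^ 3 * t ^ 2 + 3 * q ^ 4 * t ^ 2 + q ^ 5 * t ^ 2 - q ^ 4 * t ^ 3 +
      2 * q ^ 5 * t ^ 3 + q ^ 6 * t ^ 4) +
    a ^ 2 * (q ^ 4 + q ^ 5 + q ^ 3 / t + q ^ 4 / t - q ^ 4 * t + q ^ 5 * t +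
      q ^ 6 * t + q ^ 6 * t ^ 2)

theorem Hhook_one {K : Type*} [Field K] {t : K} (ht : t ≠ 0) (a : K) :
    Hhook 1 t a =
      (1 + a + t) * (a ^ 2 + a * (1 + t + t ^ 2 + t ^ 3) + t * (1 + t + t ^ 2 + t ^ 4)) / t := by
  unfold Hhook
  field_simp
  ring

theorem stmt_15 :
    let t : RatFunc ℚ := RatFunc.X
    ∀ a : RatFunc ℚ,
      Hhook 1 t a =
        (1 + a + t) *
          (a ^ 2 + a * (1 + t + t ^ 2 + t ^ 3) + t * (1 + t + t ^ 2 + t ^ 4)) / t :=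
  Hhook_one RatFunc.X_ne_zero
end

section
/- There is no sequence of pairs (a₁,b₁),…,(a₆,b₆) of integers such that, as multisets, {a₁,…,a₆} = {-3,-2,-1,-1,0,0}, {b₁,…,b₆} = {0,0,1,1,2,3}, and {a₁+b₁,…,a₆+b₆} = {-3,-2,-1,1,2,3}. -/
/-!
Expanding `∑ (aᵢ + bᵢ)² = 28` against `∑ aᵢ² = ∑ bᵢ² = 15` forces `∑ aᵢ bᵢ = -1`. But `aᵢ ≤ 0 ≤ bᵢ`,
and at most four of the six indices have `aᵢ = 0` or `bᵢ = 0`; at each of the remaining (at least two)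
indices `aᵢ bᵢ ≤ -1`, so `∑ aᵢ bᵢ ≤ -2`.
-/

open Finset

lemma Fintype.sum_comp_of_map_univ_eq {ι α β : Type*} [Fintype ι] [AddCommMonoid β]
    {a : ι → α} {s : Multiset α} (h : univ.val.map a = s) (f : α → β) :
    ∑ i, f (a i) = (s.map f).sum := by
  rw [← h, Multiset.map_map]
  rfl

lemma Fintype.forall_of_map_univ_eq {ι α : Type*} [Fintype ι] {a : ι → α} {s : Multiset α}
    {p : α → Prop} (h : univ.val.map a = s) (hs : ∀ x ∈ s, p x) (i : ι) : p (a i) :=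
  hs _ (h ▸ Multiset.mem_map_of_mem a (mem_univ i))

lemma Finset.sum_add_sq_eq {ι R : Type*} [CommSemiring R] (s : Finset ι) (a b : ι → R) :
    ∑ i ∈ s, (a i + b i) ^ 2 = ∑ i ∈ s, a i ^ 2 + ∑ i ∈ s, b i ^ 2 + 2 * ∑ i ∈ s, a i * b i := by
  simp only [add_sq, sum_add_distrib, mul_sum, mul_assoc]
  ring

lemma Int.mul_add_one_le_of_nonpos_of_nonneg {x y : ℤ} (hx : x ≤ 0) (hy : 0 ≤ y) :
    x * y + 1 ≤ (if x = 0 then 1 else 0) + (if y = 0 then 1 else 0) := by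
  by_cases hx0 : x = 0
  · simp only [hx0, zero_mul, if_true]
    split_ifs <;> norm_num
  by_cases hy0 : y = 0
  · simp [hy0, hx0]
  simp only [hx0, hy0, if_false]
  nlinarith [lt_of_le_of_ne hx hx0, lt_of_le_of_ne hy (Ne.symm hy0)]

lemma Fintype.sum_mul_add_card_le_of_nonpos_of_nonneg {ι : Type*} [Fintype ι] {a b : ι → ℤ}
    (ha : ∀ i, a i ≤ 0) (hb : ∀ i, 0 ≤ b i) :
    ∑ i, a i * b i + Fintype.card ι ≤
      ∑ i, (if a i = 0 then 1 else 0) + ∑ i, (if b i = 0 then 1 else 0) := by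
  have h := sum_le_sum fun i (_ : i ∈ univ) =>
    Int.mul_add_one_le_of_nonpos_of_nonneg (ha i) (hb i)
  simpa only [sum_add_distrib, sum_const, card_univ, nsmul_eq_mul, mul_one] using h

theorem stmt_17 :
    ¬ ∃ a b : Fin 6 → ℤ,
      (Finset.univ.val.map a = ({-3, -2, -1, -1, 0, 0} : Multiset ℤ)) ∧
      (Finset.univ.val.map b = ({0, 0, 1, 1, 2, 3} : Multiset ℤ)) ∧
      (Finset.univ.val.map (fun i => a i + b i) =
        ({-3, -2, -1, 1, 2, 3} : Multiset ℤ)) := by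
  rintro ⟨a, b, ha, hb, hab⟩
  have hprod : ∑ i, a i * b i = -1 := by
    have h := sum_add_sq_eq univ a b
    rw [Fintype.sum_comp_of_map_univ_eq hab (· ^ 2), Fintype.sum_comp_of_map_univ_eq ha (· ^ 2),
      Fintype.sum_comp_of_map_univ_eq hb (· ^ 2)] at h
    norm_num at h
    linarith
  have hle := Fintype.sum_mul_add_card_le_of_nonpos_of_nonneg
    (Fintype.forall_of_map_univ_eq ha (p := (· ≤ 0)) (by decide))
    (Fintype.forall_of_map_univ_eq hb (p := (0 ≤ ·)) (by decide))
  rw [hprod, Fintype.sum_comp_of_map_univ_eq ha (fun x => if x = 0 then 1 else 0),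
    Fintype.sum_comp_of_map_univ_eq hb (fun x => if x = 0 then 1 else 0)] at hle
  norm_num at hle
end
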